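/- Let n ≥ 2, N = n(n−1)/2, and let Ŝ ∈ 𝒮_c have unit Frobenius norm. Fix ρ ∈ (0,1) and let T^cos_c = H·T^cos_{i;jk}·H for a cosine triplet mask T^cos_{i;jk}, with Δ := ⟨T^cos_c, Ŝ⟩_F > 0. Suppose R̂ = ρ·Ŝ + E, where E is a zero-mean Gaussian random element of the (N−1)-dimensional subspace {Ŝ}^⊥ ∩ 𝒮_c with covariance σ²·Id on that subspace, where σ² = (1−ρ²)/(N−1). Then P[⟨T^cos_c, R̂⟩_F > 0] ≥ Φ( ρ·Δ / √( (2/(N−1))·(1−ρ) ) ). -/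

import Mathlib

open MeasureTheory ProbabilityTheory Matrix

noncomputable section

/-- Frobenius inner product of real matrices: `⟨A, B⟩_F = tr(Aᵀ B)`. -/
def finner {m k : Type*} [Fintype m] [Fintype k] (A B : Matrix m k ℝ) : ℝ :=
  (Aᵀ * B).trace

/-- Frobenius norm. -/
def fnorm {m k : Type*} [Fintype m] [Fintype k] (A : Matrix m k ℝ) : ℝ :=
  Real.sqrt (finner A A)

/-- `M` lies in `𝒮_c`: it is symmetric and `M 𝟙 = 0`. -/
def centeredSym {n : ℕ} (M : Matrix (Fin n) (Fin n) ℝ) : Prop :=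
  M.IsSymm ∧ M *ᵥ (fun _ => (1 : ℝ)) = 0

/-- Standard normal CDF `Φ`. -/
def Phi (x : ℝ) : ℝ := ((gaussianReal 0 1) (Set.Iic x)).toReal

/-- `E` is a zero-mean Gaussian random element supported on the subspace of matrices described by
the membership predicate `W`, with covariance `σ2 • Id` on that subspace: `E` takes values in `W`
and every linear functional `⟨T, ·⟩_F` with `T ∈ W` has the centered Gaussian law of variance
`σ2 * ‖T‖_F²`. -/
def IsIsoGaussianOn {n : ℕ} {Ω : Type*} [MeasurableSpace Ω] (P : Measure Ω)
    (E : Ω → Matrix (Fin n) (Fin n) ℝ) (W : Matrix (Fin n) (Fin n) ℝ → Prop) (σ2 : ℝ) : Prop :=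
  (∀ ω, W (E ω)) ∧
  ∀ T : Matrix (Fin n) (Fin n) ℝ, W T →
    Measure.map (fun ω => finner T (E ω)) P
      = gaussianReal 0 (Real.toNNReal (σ2 * (fnorm T) ^ 2))

/-- The centering matrix `H = I − (1/n) 𝟙 𝟙ᵀ`. -/
def Hmat (n : ℕ) : Matrix (Fin n) (Fin n) ℝ :=
  1 - ((n : ℝ)⁻¹) • Matrix.of (fun _ _ => (1 : ℝ))

/-- The squared-Euclidean triplet mask `T_{i;jk}`. -/
def tripletMask {n : ℕ} (i j k : Fin n) : Matrix (Fin n) (Fin n) ℝ :=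
  Matrix.of fun a b =>
    if a = j ∧ b = j then 1
    else if a = k ∧ b = k then -1
    else if (a = i ∧ b = j) ∨ (a = j ∧ b = i) then -1
    else if (a = i ∧ b = k) ∨ (a = k ∧ b = i) then 1
    else 0

/-- The cosine triplet mask `T^cos_{i;jk}`. -/
def cosMask {n : ℕ} (i j k : Fin n) : Matrix (Fin n) (Fin n) ℝ :=
  Matrix.of fun a b =>
    if (a = i ∧ b = j) ∨ (a = j ∧ b = i) then 1 / 2
    else if (a = i ∧ b = k) ∨ (a = k ∧ b = i) then -(1 / 2)
    else 0


/-! Split `T_c = Δ Ŝ + T_⊥` with `T_⊥ ∈ 𝒮_c ∩ {Ŝ}^⊥`, so that `⟨T_c, R̂⟩ = ρΔ + ⟨T_⊥, E⟩` and the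
probability is `Φ(ρΔ / s)`, where `s² = σ²‖T_⊥‖² = σ²(‖T_c‖² − Δ²)`. Since `H` is an orthogonal
projection and `‖T^cos‖_F = 1`, we have `‖T_c‖ ≤ 1`, hence `s² ≤ σ² = (1 − ρ)(1 + ρ)/(N − 1)
≤ 2(1 − ρ)/(N − 1)`, and `Φ(ρΔ / s)` only decreases when `s` is enlarged. -/

section Frobenius

variable {m k : Type*} [Fintype m] [Fintype k]

lemma finner_eq_vec_dotProduct (A B : Matrix m k ℝ) : finner A B = A.vec ⬝ᵥ B.vec :=
  (vec_dotProduct_vec A B).symm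

lemma finner_comm (A B : Matrix m k ℝ) : finner A B = finner B A := by
  simp only [finner_eq_vec_dotProduct, dotProduct_comm]

lemma finner_add_right (A B C : Matrix m k ℝ) : finner A (B + C) = finner A B + finner A C := by
  simp only [finner_eq_vec_dotProduct, vec_add, dotProduct_add]

lemma finner_sub_right (A B C : Matrix m k ℝ) : finner A (B - C) = finner A B - finner A C := by
  simp only [finner_eq_vec_dotProduct, vec_sub, dotProduct_sub]

lemma finner_smul_right (A B : Matrix m k ℝ) (r : ℝ) : finner A (r • B) = r * finner A B := by
  simp only [finner_eq_vec_dotProduct, vec_smul, dotProduct_smul, smul_eq_mul]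

lemma finner_sub_left (A B C : Matrix m k ℝ) : finner (A - B) C = finner A C - finner B C := by
  rw [finner_comm, finner_sub_right, finner_comm C, finner_comm C]

lemma finner_smul_left (A B : Matrix m k ℝ) (r : ℝ) : finner (r • A) B = r * finner A B := by
  rw [finner_comm, finner_smul_right, finner_comm]

lemma finner_self_nonneg (A : Matrix m k ℝ) : 0 ≤ finner A A := by
  rw [finner_eq_vec_dotProduct]
  exact Finset.sum_nonneg fun _ _ => mul_self_nonneg _

lemma finner_sq_le (A B : Matrix m k ℝ) : finner A B ^ 2 ≤ finner A A * finner B B := by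
  simp only [finner_eq_vec_dotProduct, dotProduct, ← sq]
  exact Finset.sum_mul_sq_le_sq_mul_sq _ _ _

lemma finner_self_eq_one_of_fnorm_eq_one {A : Matrix m k ℝ} (h : fnorm A = 1) :
    finner A A = 1 := by
  rwa [fnorm, Real.sqrt_eq_one] at h

lemma finner_mul_left (A : Matrix m m ℝ) (B C : Matrix m k ℝ) :
    finner (A * B) C = finner B (Aᵀ * C) := by
  rw [finner, finner, transpose_mul, Matrix.mul_assoc]

lemma finner_mul_right (A : Matrix k k ℝ) (B C : Matrix m k ℝ) :
    finner (B * A) C = finner B (C * Aᵀ) := by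
  rw [finner, finner, transpose_mul, Matrix.mul_assoc, trace_mul_comm, ← Matrix.mul_assoc]

lemma finner_self_conj_le {H : Matrix m m ℝ} (hHs : H.IsSymm) (hHH : IsIdempotentElem H)
    (C : Matrix m m ℝ) : finner (H * C * H) (H * C * H) ≤ finner C C := by
  have hproj : finner (H * C * H) (H * C * H) = finner C (H * C * H) := by
    rw [finner_mul_right, finner_mul_left, hHs.eq]
    congr 1
    simp only [Matrix.mul_assoc, hHH.eq]
    rw [← Matrix.mul_assoc H H, hHH.eq]
  have hCS := finner_sq_le C (H * C * H)
  rw [← hproj] at hCS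
  nlinarith [finner_self_nonneg C, finner_self_nonneg (H * C * H)]

end Frobenius

section OrthogonalDecomposition

variable {m k : Type*} [Fintype m] [Fintype k] {S : Matrix m k ℝ}

lemma finner_sub_proj_right (hS : finner S S = 1) (T : Matrix m k ℝ) :
    finner S (T - finner T S • S) = 0 := by
  rw [finner_sub_right, finner_smul_right, hS, mul_one, finner_comm, sub_self]

lemma finner_sub_proj_self (hS : finner S S = 1) (T : Matrix m k ℝ) :
    finner (T - finner T S • S) (T - finner T S • S) = finner T T - finner T S ^ 2 := by
  rw [finner_sub_left, finner_smul_left, finner_sub_proj_right hS,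
    finner_sub_right, finner_smul_right]
  ring

end OrthogonalDecomposition

section Centering

variable {n : ℕ}

lemma centeredSym.sub {A B : Matrix (Fin n) (Fin n) ℝ} (hA : centeredSym A) (hB : centeredSym B) :
    centeredSym (A - B) :=
  ⟨hA.1.sub hB.1, by rw [sub_mulVec, hA.2, hB.2, sub_zero]⟩

lemma centeredSym.smul {A : Matrix (Fin n) (Fin n) ℝ} (hA : centeredSym A) (r : ℝ) :
    centeredSym (r • A) :=
  ⟨hA.1.smul r, by rw [smul_mulVec, hA.2, smul_zero]⟩

lemma Hmat_isSymm : (Hmat n).IsSymm := by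
  ext a b
  simp [Hmat, one_apply, eq_comm]

lemma Hmat_isIdempotentElem (hn : n ≠ 0) : IsIdempotentElem (Hmat n) := by
  have hn' : (n : ℝ) ≠ 0 := Nat.cast_ne_zero.mpr hn
  ext a b
  simp only [Hmat, mul_apply, Matrix.sub_apply, Matrix.smul_apply, of_apply, one_apply,
    smul_eq_mul, mul_one, sub_mul, mul_sub, Finset.sum_sub_distrib]
  simp [Finset.sum_ite_eq, Finset.sum_ite_eq', Finset.card_univ]
  field_simp
  ring

lemma Hmat_mulVec_one (hn : n ≠ 0) : Hmat n *ᵥ (fun _ => (1 : ℝ)) = 0 := by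
  have hn' : (n : ℝ) ≠ 0 := Nat.cast_ne_zero.mpr hn
  ext a
  simp [Hmat, mulVec, dotProduct, one_apply, Finset.card_univ, hn']

lemma centeredSym_Hmat_conj (hn : n ≠ 0) {C : Matrix (Fin n) (Fin n) ℝ} (hC : C.IsSymm) :
    centeredSym (Hmat n * C * Hmat n) := by
  refine ⟨?_, ?_⟩
  · rw [IsSymm, transpose_mul, transpose_mul, Hmat_isSymm.eq, hC.eq, Matrix.mul_assoc]
  · rw [← mulVec_mulVec, Hmat_mulVec_one hn, mulVec_zero]

end Centering

section CosineMask

variable {n : ℕ}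

lemma cosMask_isSymm (i j k : Fin n) : (cosMask i j k).IsSymm := by
  ext a b
  simp only [cosMask, transpose_apply, of_apply]
  grind

lemma cosMask_eq_sum_single (i j k : Fin n) (hij : i ≠ j) (hik : i ≠ k) (hjk : j ≠ k) :
    cosMask i j k = (1 / 2 : ℝ) • (single i j 1 + single j i 1 - single i k 1 - single k i 1) := by
  ext a b
  simp only [cosMask, of_apply, Matrix.smul_apply, Matrix.add_apply, Matrix.sub_apply,
    single_apply, smul_eq_mul]
  split_ifs <;> grind

lemma finner_cosMask_self {i j k : Fin n} (hij : i ≠ j) (hik : i ≠ k) (hjk : j ≠ k) :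
    finner (cosMask i j k) (cosMask i j k) = 1 := by
  rw [cosMask_eq_sum_single i j k hij hik hjk, finner_eq_vec_dotProduct]
  simp [hij, hik, hjk, hij.symm, hik.symm, hjk.symm]
  norm_num

end CosineMask

section Gaussian

open scoped NNReal

lemma Phi_mono : Monotone Phi := fun _ _ h =>
  ENNReal.toReal_mono (measure_ne_top _ _) (measure_mono (Set.Iic_subset_Iic.2 h))

lemma Phi_le_one (x : ℝ) : Phi x ≤ 1 :=
  ENNReal.toReal_le_of_le_ofReal zero_le_one (by simpa using prob_le_one)

lemma toReal_gaussianReal_Ioi_neg {v : ℝ≥0} (hv : v ≠ 0) (c : ℝ) :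
    (gaussianReal 0 v (Set.Ioi (-c))).toReal = Phi (c / √v) := by
  have hσ : 0 < √(v : ℝ) := Real.sqrt_pos.2 (by positivity)
  have hstd : (gaussianReal 0 v).map (-(√(v : ℝ))⁻¹ * ·) = gaussianReal 0 1 := by
    rw [gaussianReal_map_const_mul, mul_zero]
    congr 1
    ext
    simp [inv_pow, Real.sq_sqrt v.coe_nonneg, NNReal.coe_ne_zero.2 hv]
  have hpre : (-(√(v : ℝ))⁻¹ * ·) ⁻¹' Set.Iio (c / √v) = Set.Ioi (-c) := by
    ext x
    simp only [Set.mem_preimage, Set.mem_Iio, Set.mem_Ioi]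
    rw [neg_mul, ← div_eq_inv_mul, neg_lt, ← neg_div, div_lt_div_iff_of_pos_right hσ]
  have hIio : gaussianReal 0 1 (Set.Iio (c / √v)) = gaussianReal 0 1 (Set.Iic (c / √v)) :=
    measure_congr (Iio_ae_eq_Iic' (gaussianReal_absolutelyContinuous 0 one_ne_zero
      (measure_singleton _)))
  rw [Phi, ← hIio, ← hstd, Measure.map_apply (by fun_prop) measurableSet_Iio, hpre]

lemma Phi_div_sqrt_le_gaussianReal_Ioi {v : ℝ≥0} {c w : ℝ} (hc : 0 < c) (hvw : (v : ℝ) ≤ w) :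
    Phi (c / √w) ≤ (gaussianReal 0 v (Set.Ioi (-c))).toReal := by
  rcases eq_or_ne v 0 with rfl | hv
  · rw [gaussianReal_zero_var, Measure.dirac_apply_of_mem (by simpa using hc)]
    exact Phi_le_one _
  · rw [toReal_gaussianReal_Ioi_neg hv]
    have hσ : 0 < √(v : ℝ) := Real.sqrt_pos.2 (by positivity)
    exact Phi_mono (div_le_div_of_nonneg_left hc.le hσ (Real.sqrt_le_sqrt hvw))

lemma measure_const_add_pos_of_map_eq_gaussianReal {Ω : Type*} [MeasurableSpace Ω]
    {P : Measure Ω} {G : Ω → ℝ} {v : ℝ≥0} (hG : P.map G = gaussianReal 0 v) (c : ℝ) :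
    P {ω | 0 < c + G ω} = gaussianReal 0 v (Set.Ioi (-c)) := by
  have hGm : AEMeasurable G P := aemeasurable_of_map_neZero (by rw [hG]; infer_instance)
  rw [← hG, Measure.map_apply_of_aemeasurable hGm measurableSet_Ioi]
  congr 1
  ext ω
  simp only [Set.mem_ofPred_eq, Set.mem_preimage, Set.mem_Ioi, neg_lt_iff_pos_add']

end Gaussian

lemma coe_toNNReal_one_sub_sq_div_mul_le {ρ d s : ℝ} (hρ0 : 0 ≤ ρ) (hρ1 : ρ ≤ 1) (hd : 0 ≤ d)
    (hs : s ≤ 1) : (Real.toNNReal ((1 - ρ ^ 2) / d * s) : ℝ) ≤ 2 / d * (1 - ρ) := by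
  rw [Real.coe_toNNReal']
  refine max_le ?_ (mul_nonneg (div_nonneg zero_le_two hd) (sub_nonneg.2 hρ1))
  calc (1 - ρ ^ 2) / d * s ≤ (1 - ρ ^ 2) / d :=
        mul_le_of_le_one_right (div_nonneg (by nlinarith) hd) hs
    _ ≤ 2 / d * (1 - ρ) := by
        rw [div_mul_eq_mul_div]
        gcongr
        nlinarith

theorem stmt5_general {n : ℕ} (hn : 2 ≤ n) (N : ℕ) (hN : N = n * (n - 1) / 2)
    {Ω : Type*} [MeasurableSpace Ω] (P : Measure Ω)
    (Shat : Matrix (Fin n) (Fin n) ℝ) (hSc : centeredSym Shat) (hSnorm : fnorm Shat = 1)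
    (ρ : ℝ) (hρ : ρ ∈ Set.Ioo (0 : ℝ) 1)
    (i j k : Fin n) (hij : i ≠ j) (hik : i ≠ k) (hjk : j ≠ k)
    (Tc : Matrix (Fin n) (Fin n) ℝ) (hTc : Tc = Hmat n * cosMask i j k * Hmat n)
    (hΔ : 0 < finner Tc Shat)
    (E : Ω → Matrix (Fin n) (Fin n) ℝ)
    (hE : IsIsoGaussianOn P E
      (fun M => centeredSym M ∧ finner Shat M = 0) ((1 - ρ ^ 2) / ((N : ℝ) - 1)))
    (Rhat : Ω → Matrix (Fin n) (Fin n) ℝ) (hR : ∀ ω, Rhat ω = ρ • Shat + E ω) :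
    (P {ω | 0 < finner Tc (Rhat ω)}).toReal
      ≥ Phi (ρ * finner Tc Shat / Real.sqrt ((2 / ((N : ℝ) - 1)) * (1 - ρ))) := by
  obtain ⟨hρ0, hρ1⟩ := hρ
  set Δ := finner Tc Shat
  have hSS : finner Shat Shat = 1 := finner_self_eq_one_of_fnorm_eq_one hSnorm
  have hTc_le : finner Tc Tc ≤ 1 := by
    rw [hTc, ← finner_cosMask_self hij hik hjk]
    exact finner_self_conj_le Hmat_isSymm (Hmat_isIdempotentElem (by omega)) _
  set Tp := Tc - Δ • Shat
  have hTpW : centeredSym Tp ∧ finner Shat Tp = 0 :=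
    ⟨(hTc ▸ centeredSym_Hmat_conj (by omega) (cosMask_isSymm i j k)).sub (hSc.smul Δ),
      finner_sub_proj_right hSS Tc⟩
  have hsplit (ω : Ω) : finner Tc (Rhat ω) = ρ * Δ + finner Tp (E ω) := by
    rw [hR, finner_add_right, finner_smul_right, finner_sub_left, finner_smul_left, (hE.1 ω).2,
      mul_zero, sub_zero]
  have hTp_le : fnorm Tp ^ 2 ≤ 1 := by
    rw [fnorm, Real.sq_sqrt (finner_self_nonneg _), finner_sub_proj_self hSS]
    linarith [sq_nonneg Δ]
  have hN1 : (0 : ℝ) ≤ N - 1 := by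
    have : 0 < N := hN ▸ Nat.choose_two_right n ▸ Nat.choose_pos hn
    exact sub_nonneg.2 (by exact_mod_cast this)
  simp_rw [hsplit]
  rw [measure_const_add_pos_of_map_eq_gaussianReal (hE.2 Tp hTpW), ge_iff_le]
  exact Phi_div_sqrt_le_gaussianReal_Ioi (mul_pos hρ0 hΔ)
    (coe_toNNReal_one_sub_sq_div_mul_le hρ0.le hρ1.le hN1 hTp_le)

/-- cosine-similarity case, universal lower bound. -/
theorem stmt5 {n : ℕ} (hn : 2 ≤ n) (N : ℕ) (hN : N = n * (n - 1) / 2)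
    {Ω : Type*} [MeasurableSpace Ω] (P : Measure Ω) [IsProbabilityMeasure P]
    (Shat : Matrix (Fin n) (Fin n) ℝ) (hSc : centeredSym Shat) (hSnorm : fnorm Shat = 1)
    (ρ : ℝ) (hρ : ρ ∈ Set.Ioo (0 : ℝ) 1)
    (i j k : Fin n) (hij : i ≠ j) (hik : i ≠ k) (hjk : j ≠ k)
    (Tc : Matrix (Fin n) (Fin n) ℝ) (hTc : Tc = Hmat n * cosMask i j k * Hmat n)
    (hΔ : 0 < finner Tc Shat)
    (E : Ω → Matrix (Fin n) (Fin n) ℝ)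
    (hE : IsIsoGaussianOn P E
      (fun M => centeredSym M ∧ finner Shat M = 0) ((1 - ρ ^ 2) / ((N : ℝ) - 1)))
    (Rhat : Ω → Matrix (Fin n) (Fin n) ℝ) (hR : ∀ ω, Rhat ω = ρ • Shat + E ω) :
    (P {ω | 0 < finner Tc (Rhat ω)}).toReal
      ≥ Phi (ρ * finner Tc Shat / Real.sqrt ((2 / ((N : ℝ) - 1)) * (1 - ρ))) :=
  stmt5_general hn N hN P Shat hSc hSnorm ρ hρ i j k hij hik hjk Tc hTc hΔ E hE Rhat hR
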